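/- arXiv:1511.02394 — 3 statements merged into one kernel-verified Lean document; each statement's English description precedes it below -/
import Mathlib

section
/- Let K ⊆ R^d be compact convex with B(0,ρ) ⊆ K for some ρ > 0, let Λ be a full-rank lattice with covering radius μ(Λ), and let 0 < a < ρ/(2μ(Λ)). Then K ⊆ (K ∩ aΛ) + B(0, 2aμ(Λ)(1 + diam(K)/ρ)); in particular d_H(K, K ∩ aΛ) ≤ 2aμ(Λ)(1 + diam(K)/ρ). -/
open Metric
open scoped Pointwise

/-! Shrink `x ∈ K` towards the origin by the factor `1 - t`, with `t = 2aμ/ρ`, and take a point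
`z` of `aΛ` within `aμ` of `(1 - t) • x`. Since `K` is convex and contains `B(0, ρ)`, it contains
the ball of radius `tρ = 2aμ` around `(1 - t) • x`, so `z ∈ K`; and `z` is within
`t‖x‖ + aμ ≤ 2aμ (1 + diam K / ρ)` of `x`. -/

section Sampling

variable {E : Type*}

theorem subset_add_closedBall_of_forall_exists_dist_le [SeminormedAddCommGroup E] {s t : Set E}
    {r : ℝ} (h : ∀ x ∈ s, ∃ y ∈ t, dist x y ≤ r) : s ⊆ t + closedBall 0 r := by
  intro x hx
  obtain ⟨y, hy, hxy⟩ := h x hx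
  exact ⟨y, hy, x - y, by rwa [mem_closedBall_zero_iff, ← dist_eq_norm], add_sub_cancel y x⟩

variable [NormedAddCommGroup E] [NormedSpace ℝ E] {K : Set E} {ρ : ℝ}

theorem Convex.closedBall_one_sub_smul_subset (hK : Convex ℝ K) (hball : closedBall 0 ρ ⊆ K)
    {t : ℝ} (ht₀ : 0 < t) (ht₁ : t ≤ 1) {x : E} (hx : x ∈ K) :
    closedBall ((1 - t) • x) (t * ρ) ⊆ K := by
  intro z hz
  set w := t⁻¹ • (z - (1 - t) • x)
  have hw : w ∈ K := hball <| by
    rwa [mem_closedBall_zero_iff, norm_smul, norm_inv, Real.norm_of_nonneg ht₀.le,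
      inv_mul_le_iff₀ ht₀, ← dist_eq_norm]
  have hz_eq : (1 - t) • x + t • w = z := by
    rw [smul_inv_smul₀ ht₀.ne', add_sub_cancel]
  exact hz_eq ▸ hK hx hw (by linarith) ht₀.le (by ring)

theorem Convex.exists_mem_inter_dist_le_of_net (hK : Convex ℝ K) (hKb : Bornology.IsBounded K)
    (hball : closedBall 0 ρ ⊆ K) {S : Set E} {δ : ℝ} (hδ : 0 < δ) (hδρ : δ ≤ ρ)
    (hS : ∀ x, ∃ z ∈ S, dist x z ≤ δ) (x : E) (hx : x ∈ K) :
    ∃ z ∈ K ∩ S, dist x z ≤ δ * (1 + diam K / ρ) := by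
  have hρ : 0 < ρ := hδ.trans_le hδρ
  set t := δ / ρ
  have ht₀ : 0 < t := by positivity
  obtain ⟨z, hzS, hz⟩ := hS ((1 - t) • x)
  have hzK : z ∈ K := hK.closedBall_one_sub_smul_subset hball ht₀ ((div_le_one hρ).2 hδρ) hx <| by
    rwa [mem_closedBall, dist_comm, div_mul_cancel₀ _ hρ.ne']
  have hx_norm : ‖x‖ ≤ diam K := by
    simpa using dist_le_diam_of_mem hKb hx (hball (mem_closedBall_self hρ.le))
  refine ⟨z, ⟨hzK, hzS⟩, ?_⟩
  calc dist x z ≤ dist x ((1 - t) • x) + dist ((1 - t) • x) z := dist_triangle _ _ _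
    _ = t * ‖x‖ + dist ((1 - t) • x) z := by
      rw [dist_eq_norm, sub_smul, one_smul, sub_sub_cancel, norm_smul, Real.norm_of_nonneg ht₀.le]
    _ ≤ δ / ρ * diam K + δ := by gcongr
    _ = δ * (1 + diam K / ρ) := by ring

end Sampling

/-- Let `K ⊆ ℝ^d` be compact convex with `B(0,ρ) ⊆ K`, let `aΛ` be a scaled lattice with
covering radius at most `aμ`, and `0 < a < ρ/(2μ)`. Then
`K ⊆ (K ∩ aΛ) + B(0, 2aμ(1 + diam K/ρ))`, and in particular
`d_H(K, K ∩ aΛ) ≤ 2aμ(1 + diam K/ρ)`. -/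
theorem convex_lattice_sample {d : ℕ} (Λ : Set (EuclideanSpace ℝ (Fin d)))
    (μ ρ a : ℝ) (hμ : 0 < μ) (hρ : 0 < ρ) (ha : 0 < a) (ha' : a < ρ / (2 * μ))
    (hcov : ∀ x : EuclideanSpace ℝ (Fin d), ∃ z ∈ a • Λ, dist x z ≤ a * μ)
    (K : Set (EuclideanSpace ℝ (Fin d))) (hKc : IsCompact K) (hconv : Convex ℝ K)
    (hball : closedBall 0 ρ ⊆ K) :
    K ⊆ (K ∩ a • Λ) + closedBall 0 (2 * a * μ * (1 + diam K / ρ)) ∧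
      hausdorffDist K (K ∩ a • Λ) ≤ 2 * a * μ * (1 + diam K / ρ) := by
  have hδρ : 2 * a * μ ≤ ρ := by
    rw [lt_div_iff₀ (by positivity)] at ha'
    linarith
  have hnet : ∀ x, ∃ z ∈ a • Λ, dist x z ≤ 2 * a * μ := fun x ↦
    let ⟨z, hz, hxz⟩ := hcov x
    ⟨z, hz, by linarith [mul_pos ha hμ]⟩
  have hnear := hconv.exists_mem_inter_dist_le_of_net hKc.isBounded hball (by positivity) hδρ hnet
  exact ⟨subset_add_closedBall_of_forall_exists_dist_le hnear,
    hausdorffDist_le_of_mem_dist (by positivity) hnear fun z hz ↦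
      ⟨z, hz.1, by rw [dist_self]; positivity⟩⟩
end

section
/- Let Λ ⊆ R^d be a full-rank lattice with Voronoi cell V_0(Λ) of the origin, let K ⊆ R^d be compact with the boundary of K having d-dimensional Lebesgue measure zero, and let C > 0 satisfy V_0(Λ) ⊆ B(0,C). Then the symmetric difference of K and the union ⋃_{z ∈ K ∩ aΛ}(z + aV_0(Λ)) is contained in the aC-neighborhood of ∂K; consequently its Lebesgue measure tends to 0 as a → 0+. -/
/-!
If `x` lies in `K` but is not covered, the lattice point `z` whose cell `z + aV₀` contains `x`
lies outside `K`; if `x ∉ K` is covered by the cell of some `z ∈ K`, then again `x` and `z` lie on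
opposite sides of `K`. In both cases `‖x - z‖ ≤ aC`, and the segment from `x` to `z` meets `∂K`,
so `x` is `aC`-close to `∂K`. Since `∂K` is compact and null, the measure of its closed
`aC`-thickening tends to `0` with `a`.
-/

open Metric Filter MeasureTheory
open scoped Pointwise Topology

theorem IsPreconnected.inter_frontier_nonempty {X : Type*} [TopologicalSpace X] {s t : Set X}
    (hs : IsPreconnected s) (hst : (s ∩ t).Nonempty) (hs_t : (s \ t).Nonempty) :
    (s ∩ frontier t).Nonempty := by
  by_contra h
  have hcover : s ⊆ interior t ∪ (closure t)ᶜ := by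
    intro x hx
    by_cases hxt : x ∈ closure t
    · exact Or.inl (by_contra fun hi => h ⟨x, hx, hxt, hi⟩)
    · exact Or.inr hxt
  obtain ⟨p, hps, hpt⟩ := hst
  have hp : p ∈ interior t := (hcover hps).resolve_right (not_not.2 (subset_closure hpt))
  have hs_int : s ⊆ interior t :=
    hs.subset_left_of_subset_union isOpen_interior isClosed_closure.isOpen_compl
      (Set.disjoint_compl_right_iff_subset.2 (interior_subset.trans subset_closure)) hcover
      ⟨p, hps, hp⟩
  obtain ⟨q, hqs, hqt⟩ := hs_t
  exact hqt (interior_subset (hs_int hqs))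

section Frontier

variable {E : Type*} [SeminormedAddCommGroup E] [NormedSpace ℝ E] {K : Set E} {x y : E}

theorem exists_mem_frontier_dist_le_of_mem_of_notMem (hx : x ∈ K) (hy : y ∉ K) :
    ∃ w ∈ frontier K, dist x w ≤ dist x y := by
  obtain ⟨w, hw_seg, hw⟩ := (convex_segment x y).isPreconnected.inter_frontier_nonempty
    ⟨x, left_mem_segment ℝ x y, hx⟩ ⟨y, right_mem_segment ℝ x y, hy⟩
  refine ⟨w, hw, ?_⟩
  linarith [dist_add_dist_of_mem_segment hw_seg, dist_nonneg (x := w) (y := y)]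

theorem exists_mem_frontier_dist_le_of_mem_iff_notMem (hxy : x ∈ K ↔ y ∉ K) :
    ∃ w ∈ frontier K, dist x w ≤ dist x y := by
  by_cases hx : x ∈ K
  · exact exists_mem_frontier_dist_le_of_mem_of_notMem hx (hxy.1 hx)
  · rw [← frontier_compl]
    exact exists_mem_frontier_dist_le_of_mem_of_notMem hx (hxy.not.1 hx)

end Frontier

section Digitization

variable {E : Type*} [NormedAddCommGroup E] [NormedSpace ℝ E] {Λ V K : Set E} {a C : ℝ}

def digitization (K Λ V : Set E) (a : ℝ) : Set E :=
  ⋃ z ∈ K ∩ a • Λ, (fun y => z + y) '' (a • V)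

theorem exists_sub_mem_smul_of_forall_exists_sub_mem (ha : a ≠ 0)
    (hcov : ∀ x, ∃ z ∈ Λ, x - z ∈ V) (x : E) : ∃ z ∈ a • Λ, x - z ∈ a • V := by
  obtain ⟨z, hz, hxz⟩ := hcov (a⁻¹ • x)
  refine ⟨a • z, Set.smul_mem_smul_set hz, a⁻¹ • x - z, hxz, ?_⟩
  simp only [smul_sub, smul_inv_smul₀ ha]

theorem norm_le_mul_of_mem_smul_set (ha : 0 ≤ a) (hV : V ⊆ closedBall 0 C) {v : E}
    (hv : v ∈ a • V) : ‖v‖ ≤ a * C := by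
  obtain ⟨u, hu, rfl⟩ := hv
  rw [norm_smul, Real.norm_of_nonneg ha]
  gcongr
  simpa using hV hu

theorem exists_mem_frontier_dist_le_of_mem_symmDiff_digitization (ha : 0 < a)
    (hV : V ⊆ closedBall 0 C) (hcov : ∀ x, ∃ z ∈ Λ, x - z ∈ V) {x : E}
    (hx : x ∈ symmDiff K (digitization K Λ V a)) :
    ∃ w ∈ frontier K, dist x w ≤ a * C := by
  rcases Set.mem_symmDiff.1 hx with ⟨hxK, hxD⟩ | ⟨hxD, hxK⟩
  · obtain ⟨z, hz, hxz⟩ := exists_sub_mem_smul_of_forall_exists_sub_mem ha.ne' hcov x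
    have hzK : z ∉ K := fun hzK =>
      hxD (Set.mem_biUnion ⟨hzK, hz⟩ ⟨x - z, hxz, add_sub_cancel z x⟩)
    obtain ⟨w, hw, hxw⟩ := exists_mem_frontier_dist_le_of_mem_iff_notMem (iff_of_true hxK hzK)
    exact ⟨w, hw, hxw.trans (dist_eq_norm x z ▸ norm_le_mul_of_mem_smul_set ha.le hV hxz)⟩
  · obtain ⟨z, ⟨hzK, -⟩, v, hv, rfl⟩ := Set.mem_iUnion₂.1 hxD
    obtain ⟨w, hw, hxw⟩ :=
      exists_mem_frontier_dist_le_of_mem_iff_notMem (iff_of_false hxK (not_not.2 hzK))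
    refine ⟨w, hw, hxw.trans ?_⟩
    rw [dist_self_add_left]
    exact norm_le_mul_of_mem_smul_set ha.le hV hv

theorem symmDiff_digitization_subset_cthickening (ha : 0 < a) (hV : V ⊆ closedBall 0 C)
    (hcov : ∀ x, ∃ z ∈ Λ, x - z ∈ V) :
    symmDiff K (digitization K Λ V a) ⊆ cthickening (a * C) (frontier K) := fun x hx =>
  let ⟨w, hw, hxw⟩ := exists_mem_frontier_dist_le_of_mem_symmDiff_digitization ha hV hcov hx
  mem_cthickening_of_dist_le x w _ _ hw hxw

theorem tendsto_measure_symmDiff_digitization [MeasurableSpace E] [OpensMeasurableSpace E]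
    [ProperSpace E] (μ : Measure E) [IsFiniteMeasureOnCompacts μ] (hV : V ⊆ closedBall 0 C)
    (hcov : ∀ x, ∃ z ∈ Λ, x - z ∈ V) (hK : IsCompact K) (hK_frontier : μ (frontier K) = 0) :
    Tendsto (fun a => μ (symmDiff K (digitization K Λ V a))) (𝓝[>] 0) (𝓝 0) := by
  have h_thick : Tendsto (fun r => μ (cthickening r (frontier K))) (𝓝 0) (𝓝 0) :=
    hK_frontier ▸ tendsto_measure_cthickening_of_isCompact
      (hK.closure.of_isClosed_subset isClosed_frontier frontier_subset_closure)
  have h_radius : Tendsto (fun a : ℝ => a * C) (𝓝[>] 0) (𝓝 0) :=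
    tendsto_nhdsWithin_of_tendsto_nhds (by simpa using (continuous_mul_const C).tendsto 0)
  refine tendsto_of_tendsto_of_tendsto_of_le_of_le' tendsto_const_nhds (h_thick.comp h_radius)
    (Eventually.of_forall fun _ => zero_le) ?_
  filter_upwards [self_mem_nhdsWithin] with a ha
  exact measure_mono (symmDiff_digitization_subset_cthickening ha hV hcov)

end Digitization

theorem digitization_symmDiff_general {d : ℕ} (Λ V₀ : Set (EuclideanSpace ℝ (Fin d))) (C : ℝ)
    (hV₀C : V₀ ⊆ closedBall 0 C)
    (hcov : ∀ x : EuclideanSpace ℝ (Fin d), ∃ z ∈ Λ, x - z ∈ V₀)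
    (K : Set (EuclideanSpace ℝ (Fin d))) (hK : IsCompact K)
    (hbd : volume (frontier K) = 0) :
    (∀ a : ℝ, 0 < a →
      symmDiff K (⋃ z ∈ K ∩ a • Λ, (fun y => z + y) '' (a • V₀)) ⊆
        {x | infDist x (frontier K) ≤ a * C}) ∧
    Tendsto (fun a : ℝ =>
        volume (symmDiff K (⋃ z ∈ K ∩ a • Λ, (fun y => z + y) '' (a • V₀))))
      (nhdsWithin 0 (Set.Ioi 0)) (nhds 0) := by
  refine ⟨fun a ha x hx => ?_, tendsto_measure_symmDiff_digitization volume hV₀C hcov hK hbd⟩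
  obtain ⟨w, hw, hxw⟩ := exists_mem_frontier_dist_le_of_mem_symmDiff_digitization ha hV₀C hcov hx
  exact (infDist_le_dist_of_mem hw).trans hxw

/-- Let `Λ ⊆ ℝ^d` be a lattice with Voronoi cell `V₀ = {x : ∀ z ∈ Λ, |x| ≤ |x−z|}` satisfying
`V₀ ⊆ B(0,C)`, whose translates cover `ℝ^d`, and let `K` be compact with `ℋ^d(∂K) = 0`. Then
for every `a > 0` the symmetric difference of `K` and `⋃_{z ∈ K ∩ aΛ} (z + aV₀)` is contained
in the closed `aC`-neighborhood of `∂K`, and its Lebesgue measure tends to `0` as `a → 0⁺`. -/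
theorem digitization_symmDiff {d : ℕ} (Λ V₀ : Set (EuclideanSpace ℝ (Fin d))) (C : ℝ)
    (hC : 0 < C) (hV₀def : V₀ = {x | ∀ z ∈ Λ, ‖x‖ ≤ ‖x - z‖})
    (hV₀C : V₀ ⊆ closedBall 0 C)
    (hcov : ∀ x : EuclideanSpace ℝ (Fin d), ∃ z ∈ Λ, x - z ∈ V₀)
    (K : Set (EuclideanSpace ℝ (Fin d))) (hK : IsCompact K) (hne : K.Nonempty)
    (hbd : volume (frontier K) = 0) :
    (∀ a : ℝ, 0 < a →
      symmDiff K (⋃ z ∈ K ∩ a • Λ, (fun y => z + y) '' (a • V₀)) ⊆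
        {x | infDist x (frontier K) ≤ a * C}) ∧
    Tendsto (fun a : ℝ =>
        volume (symmDiff K (⋃ z ∈ K ∩ a • Λ, (fun y => z + y) '' (a • V₀))))
      (nhdsWithin 0 (Set.Ioi 0)) (nhds 0) :=
  digitization_symmDiff_general Λ V₀ C hV₀C hcov K hK hbd
end

section
/- Let ρ, R > 0. There is a constant C = C(d,R,ρ) > 0 such that for all nonempty compact sets K, K_0 ⊆ B(0,ρ) ⊆ R^d, the parallel volumes satisfy |ℋ^d(K^R) − ℋ^d(K_0^R)| ≤ C · d_H(K, K_0). -/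
/-!
Kneser's argument. If `p` is a nearest-point map of a compact set `K` in a Euclidean space, then
`p` is monotone, `0 ≤ ⟪x - y, p x - p y⟫`, so for `0 < t ≤ 1` the map
`x ↦ p x + t • (x - p x)` is `t⁻¹`-antilipschitz; it sends the `s`-parallel set of `K` into the
`t s`-parallel set. Comparing Hausdorff measures, hence Haar measures, gives
`μ(K^s) ≤ (s / r)^n μ(K^r)` for `0 < r ≤ s`.

With `h = d_H(K₀, K)` we have `K₀^R ⊆ K^(R + h)`, so
`μ(K₀^R) - μ(K^R) ≤ ((1 + h / R)^n - 1) μ(K^R)`, which is at most `(2^n - 1) (h / R) μ(K^R)`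
when `h ≤ R` by convexity of `t ↦ t^n`. When `h > R`, both parallel sets lie in a fixed ball and
the difference is bounded by its volume times `h / R`.
-/

open Metric MeasureTheory Module
open scoped RealInnerProductSpace ENNReal NNReal

lemma one_add_pow_le_one_add_mul (n : ℕ) {t : ℝ} (h0 : 0 ≤ t) (h1 : t ≤ 1) :
    (1 + t) ^ n ≤ 1 + (2 ^ n - 1) * t := by
  have := (convexOn_pow n).2 (Set.mem_Ici.2 zero_le_one) (Set.mem_Ici.2 zero_le_two)
    (sub_nonneg.2 h1) h0 (sub_add_cancel 1 t)
  simp only [smul_eq_mul, one_pow, mul_one] at this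
  rw [show 1 - t + t * 2 = 1 + t by ring] at this
  linarith

lemma setOf_infDist_le_subset_closedBall {X : Type*} [PseudoMetricSpace X] {K : Set X}
    (hne : K.Nonempty) {c : X} {ρ : ℝ} (hK : K ⊆ closedBall c ρ) (s : ℝ) :
    {x | infDist x K ≤ s} ⊆ closedBall c (ρ + s) := by
  intro x (hx : infDist x K ≤ s)
  rw [mem_closedBall]
  refine le_of_forall_pos_lt_add fun ε hε ↦ ?_
  obtain ⟨y, hyK, hy⟩ := (infDist_lt_iff hne).1 (lt_add_of_pos_right (infDist x K) hε)
  calc dist x c ≤ dist x y + dist y c := dist_triangle x y c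
    _ < ρ + s + ε := by linarith [mem_closedBall.1 (hK hyK)]

lemma setOf_infDist_le_subset_add_hausdorffDist {X : Type*} [PseudoMetricSpace X] {K K₀ : Set X}
    (hfin : hausdorffEDist K₀ K ≠ ⊤) (R : ℝ) :
    {x | infDist x K₀ ≤ R} ⊆ {x | infDist x K ≤ R + hausdorffDist K₀ K} := fun x hx ↦
  (infDist_le_infDist_add_hausdorffDist hfin).trans (by gcongr; exact hx)

variable {F : Type*} [NormedAddCommGroup F]

theorem AntilipschitzWith.addHaar_le_mul_addHaar_image [NormedSpace ℝ F] [FiniteDimensional ℝ F]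
    [MeasurableSpace F] [BorelSpace F] (μ : Measure F) [μ.IsAddHaarMeasure] {K : ℝ≥0}
    {f : F → F} (hf : AntilipschitzWith K f) (s : Set F) :
    μ s ≤ (K : ℝ≥0∞) ^ finrank ℝ F * μ (f '' s) := by
  have hμH : (μH[finrank ℝ F] : Measure F) =
      Measure.addHaarScalarFactor μH[finrank ℝ F] μ • μ :=
    Measure.isAddLeftInvariant_eq_smul _ _
  have hc := Measure.addHaarScalarFactor_pos_of_isAddHaarMeasure (μH[finrank ℝ F] : Measure F) μ
  have := hf.le_hausdorffMeasure_image (Nat.cast_nonneg (finrank ℝ F)) s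
  rw [hμH, ENNReal.rpow_natCast] at this
  simp only [Measure.smul_apply, ENNReal.smul_def, smul_eq_mul] at this
  rw [mul_left_comm] at this
  exact (ENNReal.mul_le_mul_iff_right (by exact_mod_cast hc.ne') ENNReal.coe_ne_top).1 this

variable [InnerProductSpace ℝ F]

lemma inner_sub_sub_nonneg_of_dist_le {p : F → F} (hp : ∀ x y, dist x (p x) ≤ dist x (p y))
    (x y : F) : 0 ≤ ⟪x - y, p x - p y⟫ := by
  have hx := hp x y
  have hy := hp y x
  rw [dist_eq_norm, dist_eq_norm, ← sq_le_sq₀ (norm_nonneg _) (norm_nonneg _),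
    show x - p y = (x - p x) + (p x - p y) by abel, norm_add_sq_real] at hx
  rw [dist_eq_norm, dist_eq_norm, ← sq_le_sq₀ (norm_nonneg _) (norm_nonneg _),
    show y - p x = (y - p y) - (p x - p y) by abel, norm_sub_sq_real (y - p y)] at hy
  have : ⟪x - y, p x - p y⟫ =
      ⟪x - p x, p x - p y⟫ - ⟪y - p y, p x - p y⟫ + ‖p x - p y‖ ^ 2 := by
    rw [← real_inner_self_eq_norm_sq, ← inner_sub_left, ← inner_add_left]
    congr 1; abel
  linarith

lemma mul_norm_le_norm_smul_add_smul {a b : ℝ} (ha : 0 ≤ a) (hb : 0 ≤ b) {u v : F}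
    (huv : 0 ≤ ⟪u, v⟫) : a * ‖u‖ ≤ ‖a • u + b • v‖ := by
  refine le_of_sq_le_sq ?_ (norm_nonneg _)
  rw [norm_add_sq_real, norm_smul, norm_smul, real_inner_smul_left, real_inner_smul_right,
    Real.norm_of_nonneg ha, Real.norm_of_nonneg hb]
  nlinarith [mul_nonneg (mul_nonneg ha hb) huv, sq_nonneg (b * ‖v‖)]

lemma antilipschitzWith_add_smul_sub_of_inner_nonneg {p : F → F}
    (hp : ∀ x y, 0 ≤ ⟪x - y, p x - p y⟫) {t : ℝ} (ht₀ : 0 < t) (ht₁ : t ≤ 1) :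
    AntilipschitzWith (Real.toNNReal t⁻¹) (fun x ↦ p x + t • (x - p x)) := by
  refine AntilipschitzWith.of_le_mul_dist fun x y ↦ ?_
  have hdiff : p x + t • (x - p x) - (p y + t • (y - p y)) =
      t • (x - y) + (1 - t) • (p x - p y) := by module
  have := mul_norm_le_norm_smul_add_smul ht₀.le (sub_nonneg.2 ht₁) (hp x y)
  rw [dist_eq_norm, dist_eq_norm, hdiff, Real.coe_toNNReal _ (inv_nonneg.2 ht₀.le)]
  exact (le_inv_mul_iff₀ ht₀).2 this

lemma infDist_add_smul_sub_le {K : Set F} {x y : F} (hy : y ∈ K) (hxy : infDist x K = dist x y)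
    {t : ℝ} (ht : 0 ≤ t) : infDist (y + t • (x - y)) K ≤ t * infDist x K := by
  calc infDist (y + t • (x - y)) K ≤ dist (y + t • (x - y)) y := infDist_le_dist_of_mem hy
    _ = t * infDist x K := by
      rw [hxy, dist_eq_norm, add_sub_cancel_left, norm_smul, Real.norm_of_nonneg ht, dist_eq_norm]

theorem measure_infDist_le_le_mul [FiniteDimensional ℝ F] [MeasurableSpace F] [BorelSpace F]
    (μ : Measure F) [μ.IsAddHaarMeasure] {K : Set F} (hK : IsCompact K) (hne : K.Nonempty)
    {r s : ℝ} (hr : 0 < r) (hrs : r ≤ s) :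
    μ {x | infDist x K ≤ s} ≤
      ENNReal.ofReal ((s / r) ^ finrank ℝ F) * μ {x | infDist x K ≤ r} := by
  choose p hpK hp using hK.exists_infDist_eq_dist hne
  have hmono : ∀ x y, 0 ≤ ⟪x - y, p x - p y⟫ := inner_sub_sub_nonneg_of_dist_le fun x y ↦
    hp x ▸ infDist_le_dist_of_mem (hpK y)
  have hs : 0 < s := hr.trans_le hrs
  have ht₀ : 0 < r / s := div_pos hr hs
  have hmaps : (fun x ↦ p x + (r / s) • (x - p x)) '' {x | infDist x K ≤ s} ⊆
      {x | infDist x K ≤ r} := by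
    rintro _ ⟨x, hx, rfl⟩
    calc _ ≤ r / s * infDist x K := infDist_add_smul_sub_le (hpK x) (hp x) ht₀.le
      _ ≤ r / s * s := by gcongr; exact hx
      _ = r := div_mul_cancel₀ r hs.ne'
  calc μ {x | infDist x K ≤ s}
      ≤ (Real.toNNReal (r / s)⁻¹ : ℝ≥0∞) ^ finrank ℝ F * μ {x | infDist x K ≤ r} :=
        ((antilipschitzWith_add_smul_sub_of_inner_nonneg hmono ht₀
          ((div_le_one hs).2 hrs)).addHaar_le_mul_addHaar_image μ _).trans (by gcongr)
    _ = ENNReal.ofReal ((s / r) ^ finrank ℝ F) * μ {x | infDist x K ≤ r} := by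
      rw [inv_div, ENNReal.ofReal_pow (div_nonneg hs.le hr.le)]; rfl

theorem measureReal_infDist_le_le_mul_of_hausdorffEDist_ne_top [FiniteDimensional ℝ F]
    [MeasurableSpace F] [BorelSpace F] (μ : Measure F) [μ.IsAddHaarMeasure] {K K₀ : Set F}
    (hK : IsCompact K) (hKne : K.Nonempty) (hfin : hausdorffEDist K₀ K ≠ ⊤) {R : ℝ}
    (hR : 0 < R) :
    μ.real {x | infDist x K₀ ≤ R} ≤
      ((R + hausdorffDist K₀ K) / R) ^ finrank ℝ F * μ.real {x | infDist x K ≤ R} := by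
  have hgrow := (measure_mono (setOf_infDist_le_subset_add_hausdorffDist hfin R)).trans
    (measure_infDist_le_le_mul μ hK hKne hR (le_add_of_nonneg_right hausdorffDist_nonneg))
  obtain ⟨r, hr⟩ := hK.isBounded.subset_closedBall 0
  have hfinK : μ {x | infDist x K ≤ R} ≠ ⊤ := measure_ne_top_of_subset
    (setOf_infDist_le_subset_closedBall hKne hr R) measure_closedBall_lt_top.ne
  have hratio : 0 ≤ ((R + hausdorffDist K₀ K) / R) ^ finrank ℝ F := by
    have := hausdorffDist_nonneg (s := K₀) (t := K)
    positivity
  have := ENNReal.toReal_mono (ENNReal.mul_ne_top ENNReal.ofReal_ne_top hfinK) hgrow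
  rwa [ENNReal.toReal_mul, ENNReal.toReal_ofReal hratio] at this

theorem measureReal_infDist_le_sub_le [FiniteDimensional ℝ F] [MeasurableSpace F] [BorelSpace F]
    (μ : Measure F) [μ.IsAddHaarMeasure] {c : F} {ρ R : ℝ} (hR : 0 < R) {K K₀ : Set F}
    (hK : IsCompact K) (hKne : K.Nonempty) (hK₀ne : K₀.Nonempty) (hKρ : K ⊆ closedBall c ρ)
    (hK₀ρ : K₀ ⊆ closedBall c ρ) :
    μ.real {x | infDist x K₀ ≤ R} - μ.real {x | infDist x K ≤ R} ≤
      2 ^ finrank ℝ F * μ.real (closedBall c (ρ + R)) / R * hausdorffDist K₀ K := by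
  set n := finrank ℝ F
  set h := hausdorffDist K₀ K
  set a := μ.real {x | infDist x K ≤ R}
  set V := μ.real (closedBall c (ρ + R))
  have hV : μ (closedBall c (ρ + R)) ≠ ⊤ := measure_closedBall_lt_top.ne
  have ha : a ≤ V := measureReal_mono (setOf_infDist_le_subset_closedBall hKne hKρ R) hV
  have ha₀ : μ.real {x | infDist x K₀ ≤ R} ≤ V :=
    measureReal_mono (setOf_infDist_le_subset_closedBall hK₀ne hK₀ρ R) hV
  have ha0 : 0 ≤ a := measureReal_nonneg
  have hh : 0 ≤ h / R := div_nonneg hausdorffDist_nonneg hR.le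
  have hn : (1 : ℝ) ≤ 2 ^ n := one_le_pow₀ one_le_two
  rcases le_or_gt h R with hhR | hRh
  · have hfin : hausdorffEDist K₀ K ≠ ⊤ := hausdorffEDist_ne_top_of_nonempty_of_bounded
      hK₀ne hKne (isBounded_closedBall.subset hK₀ρ) hK.isBounded
    have hpow : ((R + h) / R) ^ n ≤ 1 + (2 ^ n - 1) * (h / R) := by
      rw [add_div, div_self hR.ne']
      exact one_add_pow_le_one_add_mul n hh ((div_le_one hR).2 hhR)
    have := measureReal_infDist_le_le_mul_of_hausdorffEDist_ne_top μ hK hKne hfin hR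
    calc _ ≤ (2 ^ n - 1) * a * (h / R) := by nlinarith
      _ ≤ 2 ^ n * V * (h / R) := by gcongr; linarith
      _ = 2 ^ n * V / R * h := by ring
  · calc _ ≤ V := by linarith
      _ ≤ V * (h / R) := le_mul_of_one_le_right (ha0.trans ha) ((one_le_div hR).2 hRh.le)
      _ ≤ 2 ^ n * V * (h / R) := by gcongr; exact le_mul_of_one_le_left (ha0.trans ha) hn
      _ = 2 ^ n * V / R * h := by ring

/-- For `ρ, R > 0` there is `C = C(d,R,ρ) > 0` such that for all nonempty compact
`K, K₀ ⊆ B(0,ρ)` the parallel volumes satisfy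
`|ℋ^d(K^R) − ℋ^d(K₀^R)| ≤ C · d_H(K,K₀)`. -/
theorem parallel_volume_lipschitz {d : ℕ} (ρ R : ℝ) (hρ : 0 < ρ) (hR : 0 < R) :
    ∃ C > (0 : ℝ), ∀ K K₀ : Set (EuclideanSpace ℝ (Fin d)),
      IsCompact K → K.Nonempty → IsCompact K₀ → K₀.Nonempty →
      K ⊆ closedBall 0 ρ → K₀ ⊆ closedBall 0 ρ →
      |(volume {x : EuclideanSpace ℝ (Fin d) | infDist x K ≤ R}).toReal -
          (volume {x : EuclideanSpace ℝ (Fin d) | infDist x K₀ ≤ R}).toReal| ≤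
        C * hausdorffDist K K₀ := by
  have hV : 0 < volume.real (closedBall (0 : EuclideanSpace ℝ (Fin d)) (ρ + R)) :=
    ENNReal.toReal_pos (measure_closedBall_pos _ _ (by linarith)).ne' measure_closedBall_lt_top.ne
  refine ⟨2 ^ d * volume.real (closedBall (0 : EuclideanSpace ℝ (Fin d)) (ρ + R)) / R,
    by positivity, fun K K₀ hK hKne hK₀ hK₀ne hKρ hK₀ρ ↦ abs_sub_le_iff.2 ⟨?_, ?_⟩⟩
  · simpa only [measureReal_def, finrank_euclideanSpace_fin] using
      measureReal_infDist_le_sub_le volume hR hK₀ hK₀ne hKne hK₀ρ hKρ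
  · simpa only [measureReal_def, finrank_euclideanSpace_fin, hausdorffDist_comm] using
      measureReal_infDist_le_sub_le volume hR hK hKne hK₀ne hKρ hK₀ρ
end
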